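/- arXiv:1405.3735 — 2 statements merged into one kernel-verified Lean document; each statement's English description precedes it below -/
import Mathlib

section
/- For all natural numbers n, k ≥ 0, I_n(((x−1)(y−1))^k) = 1, where for a two-variable polynomial p with coefficients a_{i,j}, I_n(p) = ∑_{i=0}^{n} ∑_{j=0}^{n-i} (−1)^j C(n−i, j) a_{i,j}. -/
open Finset Polynomial

/-- alternating partial sum -/
noncomputable def Hs (k r n : ℕ) : ℤ :=
  ∑ i ∈ range (n + 1), (-1 : ℤ) ^ i * (k.choose i : ℤ) * ((n - i + r).choose r : ℤ)

lemma Hs_zero (r n : ℕ) : Hs 0 r n = ((n + r).choose r : ℤ) := by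
  unfold Hs
  rw [Finset.sum_eq_single 0]
  · simp
  · intro b _ hb
    rcases Nat.exists_eq_succ_of_ne_zero hb with ⟨c, rfl⟩
    simp
  · simp

lemma Hs_rec (k r n : ℕ) : Hs (k + 1) r (n + 1) = Hs k r (n + 1) - Hs k r n := by
  unfold Hs
  rw [Finset.sum_range_succ' _ (n + 1), Finset.sum_range_succ'
    (fun i => (-1 : ℤ) ^ i * (k.choose i : ℤ) * ((n + 1 - i + r).choose r : ℤ)) (n + 1)]
  have h : ∀ i, (-1 : ℤ) ^ (i+1) * ((k+1).choose (i+1) : ℤ) * ((n + 1 - (i+1) + r).choose r : ℤ)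
      = (-1 : ℤ) ^ (i+1) * (k.choose (i+1) : ℤ) * ((n + 1 - (i+1) + r).choose r : ℤ)
        - (-1 : ℤ) ^ i * (k.choose i : ℤ) * ((n - i + r).choose r : ℤ) := by
    intro i
    have : n + 1 - (i + 1) = n - i := by omega
    rw [this, Nat.choose_succ_succ]
    push_cast
    ring
  rw [Finset.sum_congr rfl (fun i _ => h i), Finset.sum_sub_distrib]
  simp
  ring

lemma Hs_key (k : ℕ) : ∀ r n : ℕ, k ≤ r → Hs k r n = ((n + (r - k)).choose n : ℤ) := by
  induction k with
  | zero =>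
    intro r n _
    rw [Hs_zero, Nat.sub_zero, Nat.choose_symm_add]
  | succ k ih =>
    intro r n hk
    induction n with
    | zero =>
      unfold Hs; simp
    | succ n _ =>
      rw [Hs_rec, ih r (n+1) (by omega), ih r n (by omega)]
      have h1 : n + 1 + (r - k) = (n + (r - k)) + 1 := by omega
      have h2 : n + 1 + (r - (k+1)) = n + (r - k) := by omega
      rw [h1, h2, Nat.choose_succ_succ]
      push_cast
      ring

lemma vdm (m k : ℕ) : ∑ j ∈ range (m + 1), (m.choose j) * (k.choose j) = (m + k).choose k := by
  rw [Nat.add_choose_eq, Finset.Nat.sum_antidiagonal_eq_sum_range_succ_mk]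
  have h1 : ∀ j ∈ range (k + 1), m.choose j * k.choose (k - j) = m.choose j * k.choose j := by
    intro j hj
    rw [Nat.choose_symm (by simpa using Nat.lt_succ_iff.mp (mem_range.mp hj))]
  rw [Finset.sum_congr rfl h1]
  have e1 : ∑ j ∈ range (m + 1), m.choose j * k.choose j
      = ∑ j ∈ range (m + k + 1), m.choose j * k.choose j := by
    apply Finset.sum_subset
    · intro x hx; simp only [mem_range] at *; omega
    · intro x _ hx
      simp only [mem_range, not_lt] at hx
      rw [Nat.choose_eq_zero_of_lt (show m < x by omega)]
      ring
  have e2 : ∑ j ∈ range (k + 1), m.choose j * k.choose j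
      = ∑ j ∈ range (m + k + 1), m.choose j * k.choose j := by
    apply Finset.sum_subset
    · intro x hx; simp only [mem_range] at *; omega
    · intro x _ hx
      simp only [mem_range, not_lt] at hx
      rw [Nat.choose_eq_zero_of_lt (show k < x by omega)]
      ring
  rw [e1, ← e2]

lemma coeff_xsub1 {R : Type*} [CommRing R] (k i : ℕ) :
    ((X - 1 : R[X]) ^ k).coeff i = (-1 : R) ^ (k - i) * (k.choose i : R) := by
  have : (X - 1 : R[X]) = X + C (-1) := by
    simp [sub_eq_add_neg]
  rw [this, coeff_X_add_C_pow]

lemma coeff_coeff (k i j : ℕ) :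
    ((((X - 1) * (C X - 1) : (Polynomial ℤ)[X]) ^ k).coeff i).coeff j
      = ((-1 : ℤ) ^ (k - i) * (k.choose i : ℤ)) * ((-1 : ℤ) ^ (k - j) * (k.choose j : ℤ)) := by
  have h1 : ((X - 1) * (C X - 1) : (Polynomial ℤ)[X]) = (X - 1) * C (X - 1) := by
    simp
  rw [h1, mul_pow, ← C_pow, coeff_mul_C, coeff_xsub1]
  have h2 : ((-1 : Polynomial ℤ) ^ (k - i) * (k.choose i : Polynomial ℤ))
      = C ((-1 : ℤ) ^ (k - i) * (k.choose i : ℤ)) := by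
    simp [C_eq_natCast]
  rw [h2, mul_comm, coeff_mul_C, coeff_xsub1]
  ring

lemma innerSumId (m k : ℕ) :
    ∑ j ∈ range (m + 1), (-1 : ℤ) ^ j * (m.choose j : ℤ) * ((-1 : ℤ) ^ (k - j) * (k.choose j : ℤ))
      = (-1 : ℤ) ^ k * ((m + k).choose k : ℤ) := by
  have h : ∀ j ∈ range (m + 1),
      (-1 : ℤ) ^ j * (m.choose j : ℤ) * ((-1 : ℤ) ^ (k - j) * (k.choose j : ℤ))
        = (-1 : ℤ) ^ k * ((m.choose j : ℤ) * (k.choose j : ℤ)) := by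
    intro j _
    by_cases hj : j ≤ k
    · have : (-1 : ℤ) ^ j * (-1 : ℤ) ^ (k - j) = (-1) ^ k := by
        rw [← pow_add]
        congr 1
        omega
      calc (-1 : ℤ) ^ j * (m.choose j : ℤ) * ((-1 : ℤ) ^ (k - j) * (k.choose j : ℤ))
          = ((-1 : ℤ) ^ j * (-1 : ℤ) ^ (k - j)) * ((m.choose j : ℤ) * (k.choose j : ℤ)) := by ring
        _ = (-1 : ℤ) ^ k * ((m.choose j : ℤ) * (k.choose j : ℤ)) := by rw [this]
    · rw [Nat.choose_eq_zero_of_lt (show k < j by omega)]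
      push_cast
      ring
  rw [Finset.sum_congr rfl h, ← Finset.mul_sum]
  congr 1
  push_cast [← vdm m k]
  rfl

/-- The linear functional I_n on two-variable polynomials (viewed as
polynomials in x over polynomials in y): I_n(p) = ∑_{i=0}^{n} ∑_{j=0}^{n-i}
(-1)^j C(n-i,j) a_{i,j}, where a_{i,j} is the coefficient of x^i y^j. -/
noncomputable def Ik (n : ℕ) (p : Polynomial (Polynomial ℤ)) : ℤ :=
  ∑ i ∈ Finset.range (n + 1), ∑ j ∈ Finset.range (n - i + 1),
    (-1 : ℤ) ^ j * ((n - i).choose j : ℤ) * ((p.coeff i).coeff j)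

/-- For all n, k ≥ 0, I_n(((x-1)(y-1))^k) = 1. -/
theorem stmt4 (n k : ℕ) :
    Ik n (((Polynomial.X - 1) * (Polynomial.C Polynomial.X - 1)) ^ k) = 1 := by
  unfold Ik
  have hstep : ∀ i ∈ range (n + 1),
      ∑ j ∈ range (n - i + 1), (-1 : ℤ) ^ j * ((n - i).choose j : ℤ) *
        (((((X - 1) * (C X - 1) : (Polynomial ℤ)[X]) ^ k).coeff i).coeff j)
      = (-1 : ℤ) ^ i * (k.choose i : ℤ) * (((n - i) + k).choose k : ℤ) := by
    intro i _
    have h : ∀ j ∈ range (n - i + 1),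
        (-1 : ℤ) ^ j * ((n - i).choose j : ℤ) *
          (((((X - 1) * (C X - 1) : (Polynomial ℤ)[X]) ^ k).coeff i).coeff j)
        = ((-1 : ℤ) ^ (k - i) * (k.choose i : ℤ)) *
            ((-1 : ℤ) ^ j * ((n - i).choose j : ℤ) * ((-1 : ℤ) ^ (k - j) * (k.choose j : ℤ))) := by
      intro j _
      rw [coeff_coeff]
      ring
    rw [Finset.sum_congr rfl h, ← Finset.mul_sum, innerSumId]
    by_cases hi : i ≤ k
    · have hs : (-1 : ℤ) ^ (k - i) * (-1 : ℤ) ^ k = (-1 : ℤ) ^ i := by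
        rw [← pow_add, show (k - i) + k = 2 * (k - i) + i by omega, pow_add, pow_mul]
        simp
      calc (-1 : ℤ) ^ (k - i) * (k.choose i : ℤ) * ((-1 : ℤ) ^ k * ((n - i + k).choose k : ℤ))
          = ((-1 : ℤ) ^ (k - i) * (-1 : ℤ) ^ k) * ((k.choose i : ℤ) * ((n - i + k).choose k : ℤ)) := by ring
        _ = (-1 : ℤ) ^ i * (k.choose i : ℤ) * ((n - i + k).choose k : ℤ) := by rw [hs]; ring
    · rw [Nat.choose_eq_zero_of_lt (show k < i by omega)]
      push_cast
      ring
  rw [Finset.sum_congr rfl hstep]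
  have := Hs_key k k n (le_refl k)
  unfold Hs at this
  rw [Nat.sub_self] at this
  simp only [Nat.add_zero, Nat.choose_self] at this
  exact this
end

section
/- Let G be an antimatroid on a finite set S with convex sets 𝒞 (complements of feasible sets), and for convex C let int(C) = C \ ex(C) where ex(C) is the set of extreme points (p ∈ ex(C) iff p ∈ C and p is not in the convex closure of C \ {p}). Then the Tutte polynomial satisfies T(G; x, y) = ∑_{C ∈ 𝒞} (x−1)^{|C|} y^{|int(C)|}. -/
open Finset

variable {α : Type*} [DecidableEq α]

/-- The greedoid rank of a set A: the size of the largest feasible subset of A. -/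
def greedoidRank (F : Finset (Finset α)) (A : Finset α) : ℤ :=
  (((F.filter (fun B => B ⊆ A)).sup Finset.card : ℕ) : ℤ)

/-- The generalized Tutte polynomial of the greedoid with ground set S and
feasible sets F, as a polynomial in x over polynomials in y. -/
noncomputable def tutte (S : Finset α) (F : Finset (Finset α)) : Polynomial (Polynomial ℤ) :=
  ∑ A ∈ S.powerset,
    (Polynomial.X - 1) ^ (greedoidRank F S - greedoidRank F A).toNat *
      (Polynomial.C Polynomial.X - 1) ^ ((A.card : ℤ) - greedoidRank F A).toNat

/-- The convex sets: complements (in S) of feasible sets. -/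
def convexSets (S : Finset α) (F : Finset (Finset α)) : Finset (Finset α) :=
  S.powerset.filter (fun C => S \ C ∈ F)

/-- The convex closure of A: the intersection of all convex sets containing A. -/
def convClosure (S : Finset α) (F : Finset (Finset α)) (A : Finset α) : Finset α :=
  S.filter (fun x => ∀ C ∈ convexSets S F, A ⊆ C → x ∈ C)

/-- The extreme points of a convex set C: points p ∈ C not in the convex
closure of C \ {p}. -/
def extremePts (S : Finset α) (F : Finset (Finset α)) (C : Finset α) : Finset α :=
  C.filter (fun p => p ∉ convClosure S F (C \ {p}))

/-- The convInterior of C: int(C) = C \ ex(C). -/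
def convInterior (S : Finset α) (F : Finset (Finset α)) (C : Finset α) : Finset α :=
  C \ extremePts S F C

/-- The largest feasible subset of A. -/
def tauSet (F : Finset (Finset α)) (A : Finset α) : Finset α :=
  (F.filter (fun B => B ⊆ A)).sup id

lemma tau_mem (F : Finset (Finset α)) (hempty : ∅ ∈ F)
    (hunion : ∀ B ∈ F, ∀ B' ∈ F, B ∪ B' ∈ F) (A : Finset α) :
    tauSet F A ∈ F ∧ tauSet F A ⊆ A := by
  have h : ∀ s : Finset (Finset α), (∀ B ∈ s, B ∈ F ∧ B ⊆ A) →
      s.sup id ∈ F ∧ s.sup id ⊆ A := by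
    intro s
    induction s using Finset.induction_on with
    | empty => intro _; exact ⟨hempty, by simp⟩
    | @insert a s ha ih =>
      intro hmem
      have h1 := hmem a (mem_insert_self a s)
      have h2 := ih (fun B hB => hmem B (mem_insert_of_mem hB))
      rw [Finset.sup_insert]
      exact ⟨hunion a h1.1 _ h2.1, by
        simp only [id]
        exact Finset.union_subset h1.2 h2.2⟩
  exact h _ (fun B hB => by simpa using (Finset.mem_filter.mp hB))

lemma mem_tau (F : Finset (Finset α)) (A : Finset α) (x : α) :
    x ∈ tauSet F A ↔ ∃ D ∈ F, D ⊆ A ∧ x ∈ D := by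
  simp only [tauSet, Finset.mem_sup, Finset.mem_filter, id]
  tauto

lemma rank_eq (F : Finset (Finset α)) (hempty : ∅ ∈ F)
    (hunion : ∀ B ∈ F, ∀ B' ∈ F, B ∪ B' ∈ F) (A : Finset α) :
    greedoidRank F A = ((tauSet F A).card : ℤ) := by
  unfold greedoidRank
  congr 1
  apply le_antisymm
  · apply Finset.sup_le
    intro B hB
    have hBle : B ⊆ tauSet F A := Finset.le_sup (f := id) hB
    exact Finset.card_le_card hBle
  · have : tauSet F A ∈ F.filter (fun B => B ⊆ A) := by
      have h := tau_mem F hempty hunion A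
      simp [Finset.mem_filter, h.1, h.2]
    exact Finset.le_sup (f := Finset.card) this

lemma tau_full (F : Finset (Finset α)) (hempty : ∅ ∈ F) (S : Finset α) (hfull : S ∈ F)
    (hunion : ∀ B ∈ F, ∀ B' ∈ F, B ∪ B' ∈ F) : tauSet F S = S := by
  have h2 : id S ≤ (F.filter (fun B => B ⊆ S)).sup id :=
    Finset.le_sup (Finset.mem_filter.mpr ⟨hfull, subset_rfl⟩)
  exact subset_antisymm (tau_mem F hempty hunion S).2 h2

lemma mem_convexSets (S : Finset α) (F : Finset (Finset α)) (C : Finset α) :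
    C ∈ convexSets S F ↔ C ⊆ S ∧ S \ C ∈ F := by
  simp [convexSets]

lemma cl_compl (S : Finset α) (F : Finset (Finset α)) (hsub : ∀ B ∈ F, B ⊆ S)
    {A : Finset α} (hA : A ⊆ S) :
    convClosure S F (S \ A) = S \ tauSet F A := by
  ext x
  simp only [convClosure, Finset.mem_filter, Finset.mem_sdiff, mem_tau]
  constructor
  · rintro ⟨hxS, h⟩
    refine ⟨hxS, ?_⟩
    rintro ⟨D, hDF, hDA, hxD⟩
    have hC : S \ D ∈ convexSets S F := by
      rw [mem_convexSets]
      exact ⟨Finset.sdiff_subset, by rw [Finset.sdiff_sdiff_self_left,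
        Finset.inter_eq_right.mpr (hsub D hDF)]; exact hDF⟩
    have := h (S \ D) hC (Finset.sdiff_subset_sdiff subset_rfl hDA)
    exact (Finset.mem_sdiff.mp this).2 hxD
  · rintro ⟨hxS, hnx⟩
    refine ⟨hxS, ?_⟩
    intro C hC hSC
    rw [mem_convexSets] at hC
    by_contra hxC
    exact hnx ⟨S \ C, hC.2, by
      intro y hy
      rw [Finset.mem_sdiff] at hy
      by_contra hyA
      exact hy.2 (hSC (Finset.mem_sdiff.mpr ⟨hy.1, hyA⟩)), Finset.mem_sdiff.mpr ⟨hxS, hxC⟩⟩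

lemma cl_mono (S : Finset α) (F : Finset (Finset α)) {A B : Finset α} (h : A ⊆ B) :
    convClosure S F A ⊆ convClosure S F B := by
  intro x hx
  simp only [convClosure, Finset.mem_filter] at hx ⊢
  exact ⟨hx.1, fun C hC hBC => hx.2 C hC (h.trans hBC)⟩

lemma subset_cl (S : Finset α) (F : Finset (Finset α)) {B : Finset α} (hB : B ⊆ S) :
    B ⊆ convClosure S F B := by
  intro x hx
  simp only [convClosure, Finset.mem_filter]
  exact ⟨hB hx, fun C _ hBC => hBC hx⟩

lemma cl_self (S : Finset α) (F : Finset (Finset α)) {C : Finset α}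
    (hC : C ∈ convexSets S F) : convClosure S F C = C := by
  apply subset_antisymm
  · intro x hx
    simp only [convClosure, Finset.mem_filter] at hx
    exact hx.2 C hC subset_rfl
  · exact subset_cl S F ((mem_convexSets S F C).mp hC).1

lemma cl_subset_convex (S : Finset α) (F : Finset (Finset α)) {B C : Finset α}
    (hC : C ∈ convexSets S F) (h : B ⊆ C) : convClosure S F B ⊆ C := by
  intro x hx
  simp only [convClosure, Finset.mem_filter] at hx
  exact hx.2 C hC h

/-- Exchange property for antimatroids. -/
lemma exchange (F : Finset (Finset α))
    (hacc : ∀ B ∈ F, B.Nonempty → ∃ x ∈ B, B \ {x} ∈ F)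
    (hunion : ∀ B ∈ F, ∀ B' ∈ F, B ∪ B' ∈ F) :
    ∀ n (A : Finset α), A.card ≤ n → A ∈ F → ∀ B ∈ F, ¬ A ⊆ B →
      ∃ a ∈ A, a ∉ B ∧ B ∪ {a} ∈ F := by
  intro n
  induction n with
  | zero =>
    intro A hcard hA B hB hAB
    rw [Nat.le_zero, Finset.card_eq_zero] at hcard
    exact absurd (hcard ▸ Finset.empty_subset B) hAB
  | succ n ih =>
    intro A hcard hA B hB hAB
    have hne : A.Nonempty := by
      rw [Finset.nonempty_iff_ne_empty]
      rintro rfl; exact hAB (Finset.empty_subset B)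
    obtain ⟨x, hxA, hA'⟩ := hacc A hA hne
    by_cases h : A \ {x} ⊆ B
    · have hxB : x ∉ B := by
        intro hxB
        apply hAB
        intro y hy
        by_cases hyx : y = x
        · exact hyx ▸ hxB
        · exact h (Finset.mem_sdiff.mpr ⟨hy, by simp [hyx]⟩)
      refine ⟨x, hxA, hxB, ?_⟩
      have : B ∪ A ∈ F := hunion B hB A hA
      have hBA : B ∪ A = B ∪ {x} := by
        ext y
        simp only [Finset.mem_union, Finset.mem_singleton]
        constructor
        · rintro (hy | hy)
          · exact Or.inl hy
          · by_cases hyx : y = x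
            · exact Or.inr hyx
            · exact Or.inl (h (Finset.mem_sdiff.mpr ⟨hy, by simp [hyx]⟩))
        · rintro (hy | rfl)
          · exact Or.inl hy
          · exact Or.inr hxA
      rwa [hBA] at this
    · have hcard' : (A \ {x}).card ≤ n := by
        have := Finset.card_sdiff_add_card_eq_card (Finset.singleton_subset_iff.mpr hxA)
        simp only [Finset.card_singleton] at this
        omega
      obtain ⟨a, ha, haB, hF⟩ := ih (A \ {x}) hcard' hA' B hB h
      exact ⟨a, (Finset.mem_sdiff.mp ha).1, haB, hF⟩

/-- Krein–Milman: a convex set is the closure of its extreme points. -/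
lemma krein_milman (S : Finset α) (F : Finset (Finset α))
    (hsub : ∀ B ∈ F, B ⊆ S)
    (hacc : ∀ B ∈ F, B.Nonempty → ∃ x ∈ B, B \ {x} ∈ F)
    (hunion : ∀ B ∈ F, ∀ B' ∈ F, B ∪ B' ∈ F)
    {C : Finset α} (hC : C ∈ convexSets S F) :
    C ⊆ convClosure S F (extremePts S F C) := by
  rw [mem_convexSets] at hC
  intro c hc
  simp only [convClosure, Finset.mem_filter]
  refine ⟨hC.1 hc, ?_⟩
  intro C' hC' hexC'
  rw [mem_convexSets] at hC'
  set D := S \ C with hD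
  set D' := S \ C' with hD'
  have hDD' : D' ⊆ D := by
    by_contra hcon
    obtain ⟨a, haD', haD, hDa⟩ := exchange F hacc hunion (S \ C').card (S \ C') le_rfl hC'.2 D hC.2 hcon
    have haS : a ∈ S := (Finset.mem_sdiff.mp haD').1
    have haC : a ∈ C := by
      by_contra h
      exact haD (Finset.mem_sdiff.mpr ⟨haS, h⟩)
    have haex : a ∈ extremePts S F C := by
      rw [extremePts, Finset.mem_filter]
      refine ⟨haC, ?_⟩
      intro hacl
      have hDa' : S \ (D ∪ {a}) ∈ convexSets S F := by
        rw [mem_convexSets]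
        refine ⟨Finset.sdiff_subset, ?_⟩
        rw [Finset.sdiff_sdiff_self_left, Finset.inter_eq_right.mpr]
        · exact hDa
        · exact Finset.union_subset (hsub _ hC.2) (Finset.singleton_subset_iff.mpr haS)
      have hsubCa : C \ {a} ⊆ S \ (D ∪ {a}) := by
        intro y hy
        rw [Finset.mem_sdiff, Finset.mem_singleton] at hy
        rw [Finset.mem_sdiff, Finset.mem_union, Finset.mem_singleton]
        refine ⟨hC.1 hy.1, ?_⟩
        rintro (h | h)
        · exact (Finset.mem_sdiff.mp h).2 hy.1
        · exact hy.2 h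
      simp only [convClosure, Finset.mem_filter] at hacl
      have := hacl.2 _ hDa' hsubCa
      rw [Finset.mem_sdiff, Finset.mem_union] at this
      exact this.2 (Or.inr (Finset.mem_singleton_self a))
    have : a ∉ D' := fun h => (Finset.mem_sdiff.mp h).2 (hexC' haex)
    exact this haD'
  -- now C ⊆ C'
  by_contra hcC'
  have : c ∈ D' := Finset.mem_sdiff.mpr ⟨hC.1 hc, hcC'⟩
  exact (Finset.mem_sdiff.mp (hDD' this)).2 hc

/-- Characterization of fibers of the closure map. -/
lemma cl_eq_iff (S : Finset α) (F : Finset (Finset α))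
    (hsub : ∀ B ∈ F, B ⊆ S)
    (hacc : ∀ B ∈ F, B.Nonempty → ∃ x ∈ B, B \ {x} ∈ F)
    (hunion : ∀ B ∈ F, ∀ B' ∈ F, B ∪ B' ∈ F)
    {C : Finset α} (hC : C ∈ convexSets S F) {B : Finset α} (hB : B ⊆ S) :
    convClosure S F B = C ↔ extremePts S F C ⊆ B ∧ B ⊆ C := by
  constructor
  · intro h
    have hBC : B ⊆ C := h ▸ subset_cl S F hB
    refine ⟨?_, hBC⟩
    intro p hp
    by_contra hpB
    have hBCp : B ⊆ C \ {p} := fun y hy =>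
      Finset.mem_sdiff.mpr ⟨hBC hy, by simp; rintro rfl; exact hpB hy⟩
    have hpB' : p ∈ convClosure S F B := by
      rw [h]; exact (Finset.mem_filter.mp hp).1
    have h1 : p ∈ convClosure S F (C \ {p}) := cl_mono S F hBCp hpB'
    exact (Finset.mem_filter.mp hp).2 h1
  · rintro ⟨hex, hBC⟩
    apply subset_antisymm
    · exact cl_subset_convex S F hC hBC
    · exact (krein_milman S F hsub hacc hunion hC).trans (cl_mono S F hex)

lemma sum_pow_card {R : Type*} [CommSemiring R] (s : Finset α) (r : R) :
    ∑ t ∈ s.powerset, r ^ t.card = (r + 1) ^ s.card := by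
  induction s using Finset.induction_on with
  | empty => simp
  | @insert a s ha ih =>
    rw [Finset.sum_powerset_insert ha, Finset.card_insert_of_notMem ha, pow_succ]
    have : ∑ t ∈ s.powerset, r ^ (insert a t).card = ∑ t ∈ s.powerset, r * r ^ t.card := by
      apply Finset.sum_congr rfl
      intro t ht
      rw [Finset.card_insert_of_notMem (fun h => ha (Finset.mem_powerset.mp ht h)), pow_succ]
      ring
    rw [this, ← Finset.mul_sum, ih]
    ring

lemma cl_eq_compl_tau (S : Finset α) (F : Finset (Finset α)) (hsub : ∀ B ∈ F, B ⊆ S)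
    {B : Finset α} (hB : B ⊆ S) :
    convClosure S F B = S \ tauSet F (S \ B) := by
  have h1 : S \ (S \ B) = B := by
    rw [Finset.sdiff_sdiff_self_left, Finset.inter_eq_right.mpr hB]
  rw [← h1, cl_compl S F hsub Finset.sdiff_subset, h1]

lemma cl_mem_convex (S : Finset α) (F : Finset (Finset α)) (hsub : ∀ B ∈ F, B ⊆ S)
    (hempty : ∅ ∈ F) (hunion : ∀ B ∈ F, ∀ B' ∈ F, B ∪ B' ∈ F)
    {B : Finset α} (hB : B ⊆ S) :
    convClosure S F B ∈ convexSets S F := by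
  rw [cl_eq_compl_tau S F hsub hB, mem_convexSets]
  have htau := tau_mem F hempty hunion (S \ B)
  refine ⟨Finset.sdiff_subset, ?_⟩
  rw [Finset.sdiff_sdiff_self_left, Finset.inter_eq_right.mpr (hsub _ htau.1)]
  exact htau.1

/-- The convex set expansion of the Tutte polynomial of an antimatroid:
T(G; x, y) = ∑_{C convex} (x-1)^{|C|} y^{|int(C)|}. -/
theorem stmt17 (S : Finset α) (F : Finset (Finset α))
    (hsub : ∀ B ∈ F, B ⊆ S) (hempty : ∅ ∈ F) (hfull : S ∈ F)
    (hacc : ∀ B ∈ F, B.Nonempty → ∃ x ∈ B, B \ {x} ∈ F)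
    (hunion : ∀ B ∈ F, ∀ B' ∈ F, B ∪ B' ∈ F) :
    tutte S F =
      ∑ C ∈ convexSets S F,
        (Polynomial.X - 1) ^ C.card *
          (Polynomial.C Polynomial.X) ^ (convInterior S F C).card := by
  classical
  have hrk : ∀ A : Finset α, greedoidRank F A = ((tauSet F A).card : ℤ) :=
    rank_eq F hempty hunion
  have htauS : tauSet F S = S := tau_full F hempty S hfull hunion
  -- Step 1: rewrite tutte as a sum over complements, in terms of closures
  have step1 : tutte S F = ∑ B ∈ S.powerset,
      (Polynomial.X - 1) ^ (convClosure S F B).card *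
        (Polynomial.C Polynomial.X - 1) ^ ((convClosure S F B) \ B).card := by
    rw [tutte]
    refine Finset.sum_nbij' (fun A => S \ A) (fun B => S \ B)
      (fun A hA => Finset.mem_powerset.mpr Finset.sdiff_subset)
      (fun B hB => Finset.mem_powerset.mpr Finset.sdiff_subset)
      (fun A hA => by
        show S \ (S \ A) = A
        rw [Finset.sdiff_sdiff_self_left, Finset.inter_eq_right.mpr (Finset.mem_powerset.mp hA)])
      (fun B hB => by
        show S \ (S \ B) = B
        rw [Finset.sdiff_sdiff_self_left, Finset.inter_eq_right.mpr (Finset.mem_powerset.mp hB)])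
      ?_
    intro A hA
    have hAS : A ⊆ S := Finset.mem_powerset.mp hA
    have htauA : tauSet F A ⊆ A := (tau_mem F hempty hunion A).2
    have hcl : convClosure S F (S \ A) = S \ tauSet F A := cl_compl S F hsub hAS
    have e1 : (greedoidRank F S - greedoidRank F A).toNat = (S \ tauSet F A).card := by
      rw [hrk, hrk, htauS, Int.toNat_sub, Finset.card_sdiff_of_subset (htauA.trans hAS)]
    have e2 : ((A.card : ℤ) - greedoidRank F A).toNat = (A \ tauSet F A).card := by
      rw [hrk, Int.toNat_sub, Finset.card_sdiff_of_subset htauA]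
    have e3 : (S \ tauSet F A) \ (S \ A) = A \ tauSet F A := by
      ext x
      simp only [Finset.mem_sdiff, not_and, not_not]
      constructor
      · rintro ⟨⟨hxS, hxt⟩, h⟩
        exact ⟨h hxS, hxt⟩
      · rintro ⟨hxA, hxt⟩
        exact ⟨⟨hAS hxA, hxt⟩, fun _ => hxA⟩
    rw [e1, e2, hcl, e3]
  rw [step1]
  -- Step 2: group by the closure
  have hmaps : ∀ B ∈ S.powerset, convClosure S F B ∈ convexSets S F :=
    fun B hB => cl_mem_convex S F hsub hempty hunion (Finset.mem_powerset.mp hB)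
  rw [← Finset.sum_fiberwise_of_maps_to hmaps]
  -- Step 3: evaluate each fiber
  apply Finset.sum_congr rfl
  intro C hC
  have hCS : C ⊆ S := ((mem_convexSets S F C).mp hC).1
  have hfiber : ∀ B, B ∈ S.powerset.filter (fun B => convClosure S F B = C) ↔
      extremePts S F C ⊆ B ∧ B ⊆ C := by
    intro B
    rw [Finset.mem_filter, Finset.mem_powerset]
    constructor
    · rintro ⟨hBS, hclB⟩
      exact (cl_eq_iff S F hsub hacc hunion hC hBS).mp hclB
    · rintro ⟨h1, h2⟩
      exact ⟨h2.trans hCS, (cl_eq_iff S F hsub hacc hunion hC (h2.trans hCS)).mpr ⟨h1, h2⟩⟩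
  have step3 : ∑ B ∈ S.powerset.filter (fun B => convClosure S F B = C),
      ((Polynomial.X - 1 : Polynomial (Polynomial ℤ))) ^ (convClosure S F B).card *
        (Polynomial.C Polynomial.X - 1) ^ ((convClosure S F B) \ B).card
      = ∑ D ∈ (convInterior S F C).powerset,
          (Polynomial.X - 1) ^ C.card * (Polynomial.C Polynomial.X - 1) ^ D.card := by
    refine Finset.sum_nbij' (fun B => C \ B) (fun D => C \ D) ?_ ?_ ?_ ?_ ?_
    · intro B hB
      obtain ⟨h1, h2⟩ := (hfiber B).mp hB
      rw [Finset.mem_powerset]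
      intro x hx
      rw [Finset.mem_sdiff] at hx
      rw [convInterior, Finset.mem_sdiff]
      exact ⟨hx.1, fun h => hx.2 (h1 h)⟩
    · intro D hD
      rw [Finset.mem_powerset] at hD
      rw [hfiber]
      refine ⟨?_, Finset.sdiff_subset⟩
      intro p hp
      have hpC : p ∈ C := (Finset.mem_filter.mp hp).1
      rw [Finset.mem_sdiff]
      refine ⟨hpC, fun hpD => ?_⟩
      have := hD hpD
      rw [convInterior, Finset.mem_sdiff] at this
      exact this.2 hp
    · intro B hB
      obtain ⟨_, h2⟩ := (hfiber B).mp hB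
      show C \ (C \ B) = B
      rw [Finset.sdiff_sdiff_self_left, Finset.inter_eq_right.mpr h2]
    · intro D hD
      rw [Finset.mem_powerset] at hD
      have hDC : D ⊆ C := hD.trans (Finset.sdiff_subset)
      show C \ (C \ D) = D
      rw [Finset.sdiff_sdiff_self_left, Finset.inter_eq_right.mpr hDC]
    · intro B hB
      obtain ⟨_, _⟩ := (hfiber B).mp hB
      have hclB : convClosure S F B = C := (Finset.mem_filter.mp hB).2
      rw [hclB]
  rw [step3, ← Finset.mul_sum, sum_pow_card, sub_add_cancel]
end
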